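/- arXiv:2006.10799 — 6 statements merged into one kernel-verified Lean document; each statement's English description precedes it below -/
import Mathlib

section
/- Let X and Z be real vector spaces, L : X → Z a linear map, Q : Z → Z a linear map satisfying Q ∘ Q = Q and ker Q = range L, and let N : X → Z be any map. Fix y ∈ range L and a real number ε > 0. Then for every x ∈ X, the equation L x = ε • N x + y holds if and only if the equation L x = Q(N x) + ε • (N x − Q(N x)) + y holds. (In particular, the set of solutions of L x = ε N x + y equals the set of solutions of L x = Q N x + ε (Id − Q) N x + y.) -/
/-- Gaines–Mawhin Lemma IV.1 (solution-set equivalence): if `Q` is a linear projector of `Z`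
with `ker Q = range L` and `y ∈ range L`, then for `ε > 0` the equation `L x = ε • N x + y`
is equivalent to `L x = Q (N x) + ε • (N x - Q (N x)) + y`. -/
theorem stmt_0 {X Z : Type*} [AddCommGroup X] [Module ℝ X] [AddCommGroup Z] [Module ℝ Z]
    (L : X →ₗ[ℝ] Z) (Q : Z →ₗ[ℝ] Z)
    (hQproj : ∀ z, Q (Q z) = Q z)
    (hQker : LinearMap.ker Q = LinearMap.range L)
    (N : X → Z) (y : Z) (hy : y ∈ LinearMap.range L)
    (ε : ℝ) (hε : 0 < ε) (x : X) :
    L x = ε • N x + y ↔ L x = Q (N x) + ε • (N x - Q (N x)) + y := by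
  have hQL : ∀ v : X, Q (L v) = 0 := fun v =>
    (LinearMap.mem_ker.mp (hQker ▸ LinearMap.mem_range_self L v : L v ∈ LinearMap.ker Q))
  have hQy : Q y = 0 := LinearMap.mem_ker.mp (hQker ▸ hy)
  constructor
  · intro h
    have hQN : Q (N x) = 0 := by
      have := congrArg Q h
      rw [hQL, map_add, map_smul, hQy, add_zero] at this
      have : ε • Q (N x) = 0 := this.symm
      have := smul_eq_zero.mp this
      rcases this with h1 | h2
      · exact absurd h1 hε.ne'
      · exact h2
    rw [h, hQN, smul_sub, smul_zero, sub_zero, zero_add]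
  · intro h
    have hQN : Q (N x) = 0 := by
      have := congrArg Q h
      rw [hQL, map_add, map_add, map_smul, map_sub, hQproj, sub_self, smul_zero,
        add_zero, hQy, add_zero] at this
      exact this.symm
    rw [h, hQN, zero_add, sub_zero]
end

section
/- Let X and Z be real vector spaces, L : X → Z a linear map, Ω ⊆ X a subset, and N : Ω → Z any map. Suppose there are linear maps P : X → X with P ∘ P = P and range P = ker L; Q : Z → Z with Q ∘ Q = Q and ker Q = range L; K : Z → X with L(K z) = z − Q z and P(K z) = 0 for every z ∈ Z; and A : Z → X with range A = ker L and ker A = range L. Then for every x ∈ Ω: L x = N x if and only if x − P x = A(N x) + K(N x). -/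
/-- Gaines–Mawhin Proposition III.2 (fixed-point reformulation): with projectors `P`, `Q`
(`range P = ker L`, `ker Q = range L`), a generalized inverse `K` of `L`
(`L (K z) = z - Q z`, `P (K z) = 0`), and `A` encoding `Λ ∘ Π`
(`range A = ker L`, `ker A = range L`), for every `x ∈ Ω` one has
`L x = N x` if and only if `x - P x = A (N x) + K (N x)`. -/
theorem stmt_1 {X Z : Type*} [AddCommGroup X] [Module ℝ X] [AddCommGroup Z] [Module ℝ Z]
    (L : X →ₗ[ℝ] Z) (Ω : Set X) (N : X → Z)
    (P : X →ₗ[ℝ] X) (hPproj : ∀ x, P (P x) = P x)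
    (hPrange : LinearMap.range P = LinearMap.ker L)
    (Q : Z →ₗ[ℝ] Z) (hQproj : ∀ z, Q (Q z) = Q z)
    (hQker : LinearMap.ker Q = LinearMap.range L)
    (K : Z →ₗ[ℝ] X) (hK1 : ∀ z, L (K z) = z - Q z) (hK2 : ∀ z, P (K z) = 0)
    (A : Z →ₗ[ℝ] X) (hArange : LinearMap.range A = LinearMap.ker L)
    (hAker : LinearMap.ker A = LinearMap.range L)
    (x : X) (hx : x ∈ Ω) :
    L x = N x ↔ x - P x = A (N x) + K (N x) := by
  -- P fixes elements of ker L
  have hPfix : ∀ y, L y = 0 → P y = y := by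
    intro y hy
    have : y ∈ LinearMap.range P := hPrange ▸ (LinearMap.mem_ker.mpr hy)
    obtain ⟨w, hw⟩ := this
    rw [← hw, hPproj]
  have hLP : ∀ y, L (P y) = 0 := by
    intro y
    have : P y ∈ LinearMap.ker L := hPrange ▸ LinearMap.mem_range_self P y
    exact this
  constructor
  · intro h
    -- N x ∈ range L, so Q (N x) = 0 and A (N x) = 0
    have hmem : N x ∈ LinearMap.range L := ⟨x, h⟩
    have hQ0 : Q (N x) = 0 := LinearMap.mem_ker.mp (hQker ▸ hmem)
    have hA0 : A (N x) = 0 := LinearMap.mem_ker.mp (hAker ▸ hmem)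
    have hL : L (x - K (N x)) = 0 := by
      simp [map_sub, hK1, hQ0, h]
    have := hPfix _ hL
    have hPK : P (x - K (N x)) = P x := by
      simp [map_sub, hK2]
    rw [hPK] at this
    rw [hA0, zero_add]
    linear_combination (norm := module) -this
  · intro h
    -- apply P to both sides: A (N x) = 0
    have hPA : P (A (N x)) = A (N x) := by
      apply hPfix
      have : A (N x) ∈ LinearMap.ker L := hArange ▸ LinearMap.mem_range_self A (N x)
      exact this
    have hP : P (x - P x) = 0 := by simp [map_sub, hPproj]
    have hA0 : A (N x) = 0 := by
      have := congrArg P h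
      rw [hP, map_add, hPA, hK2, add_zero] at this
      exact this.symm
    have hmem : N x ∈ LinearMap.range L := hAker ▸ (LinearMap.mem_ker.mpr hA0)
    have hQ0 : Q (N x) = 0 := LinearMap.mem_ker.mp (hQker ▸ hmem)
    have := congrArg L h
    rw [map_sub, hLP, sub_zero, map_add, hK1, hQ0, sub_zero] at this
    have hLA : L (A (N x)) = 0 := by rw [hA0, map_zero]
    rw [hLA, zero_add] at this
    exact this
end

section
/- Let D ⊆ ℝⁿ be open, ε₀ > 0, T > 0, and let F : ℝ × D × [0, ε₀] → ℝⁿ be continuous and T-periodic in its first variable. Define f₁(z) = (1/T) ∫₀ᵀ F(s, z, 0) ds. Let z* ∈ D and let V ⊆ ℝⁿ be a bounded open neighbourhood of z* with closure(V) ⊆ D such that f₁(z) ≠ 0 for every z ∈ closure(V) \ {z*}. Then there exists ε₁ ∈ (0, ε₀] such that for every λ ∈ (0, 1] and every ε ∈ (0, ε₁], any T-periodic solution x : ℝ → ℝⁿ of the differential equation x' = ε λ F(t, x, ε) satisfying x(t) ∈ closure(V) for all t in fact satisfies x(t) ∈ V for all t. -/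
/-!
Let `C = closure V \ V`. Since `z* ∈ V`, the averaged function `f₁` has no zero on the compact
set `C`, so `‖f₁‖ ≥ δ > 0` there. Integrating `x' = ε λ F(t, x, ε)` over a period shows
`∫₀ᵀ F(s, x(s), ε) ds = 0`, and the solution moves by at most `ε M T` in one period, `M` a bound
for `F`. By uniform continuity of `F` on a compact set, for small `ε` this forces
`‖f₁(x(t))‖ ≤ δ / 2` for every `t`, so `x(t) ∉ C`.
-/

open MeasureTheory Set Function

theorem exists_pos_forall_dist_lt_of_continuousOn {Y Z : Type*} [PseudoMetricSpace Y]
    [PseudoMetricSpace Z] {F : ℝ → Y → ℝ → Z} {I P : Set ℝ} {S : Set Y}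
    (hI : IsCompact I) (hS : IsCompact S) (hP : IsCompact P)
    (hF : ContinuousOn (fun p : ℝ × Y × ℝ => F p.1 p.2.1 p.2.2) (I ×ˢ S ×ˢ P))
    {r : ℝ} (hr : 0 < r) :
    ∃ η > 0, ∀ s ∈ I, ∀ z ∈ S, ∀ w ∈ S, ∀ e ∈ P, ∀ e' ∈ P,
      dist z w < η → dist e e' < η → dist (F s z e) (F s w e') < r := by
  obtain ⟨η, hη, hmod⟩ := Metric.uniformContinuousOn_iff.1
    ((hI.prod (hS.prod hP)).uniformContinuousOn_of_continuous hF) r hr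
  refine ⟨η, hη, fun s hs z hz w hw e he e' he' hzw hee' => hmod (s, z, e) ⟨hs, hz, he⟩
    (s, w, e') ⟨hs, hw, he'⟩ ?_⟩
  simpa only [Prod.dist_eq, dist_self, max_lt_iff] using ⟨hη, hzw, hee'⟩

section

variable {E : Type*} [NormedAddCommGroup E] [NormedSpace ℝ E]

theorem intervalIntegral_eq_zero_of_periodic_of_hasDerivAt [CompleteSpace E] {x g : ℝ → E}
    {T c : ℝ} (hc : c ≠ 0) (hx : Periodic x T) (hderiv : ∀ t, HasDerivAt x (c • g t) t)
    (hg : IntervalIntegrable g volume 0 T) : ∫ t in (0 : ℝ)..T, g t = 0 := by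
  have hxT : x T = x 0 := by simpa using hx 0
  have : c • ∫ t in (0 : ℝ)..T, g t = 0 := by
    rw [← intervalIntegral.integral_smul,
      intervalIntegral.integral_eq_sub_of_hasDerivAt (fun t _ => hderiv t) (hg.smul c), hxT,
      sub_self]
  exact (smul_eq_zero.1 this).resolve_left hc

theorem continuousOn_intervalIntegral_of_continuousOn_prod {X : Type*} [TopologicalSpace X]
    [CompleteSpace E] {G : ℝ → X → E} {S : Set X}
    (hG : ContinuousOn (fun p : ℝ × X => G p.1 p.2) (univ ×ˢ S)) (a b : ℝ) :
    ContinuousOn (fun z => ∫ s in a..b, G s z) S := by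
  rw [continuousOn_iff_continuous_domRestrict]
  have : Continuous (uncurry fun (z : S) s => G s z) :=
    hG.comp_continuous (f := fun p : S × ℝ => (p.2, (p.1 : X))) (by fun_prop)
      fun p => ⟨trivial, p.1.2⟩
  exact intervalIntegral.continuous_parametric_intervalIntegral_of_continuous' this a b

theorem dist_le_of_hasDerivAt_of_norm_le {x x' : ℝ → E} {a b C : ℝ}
    (hderiv : ∀ t, HasDerivAt x (x' t) t) (hbound : ∀ t ∈ Icc a b, ‖x' t‖ ≤ C) {s t : ℝ}
    (hs : s ∈ Icc a b) (ht : t ∈ Icc a b) : dist (x s) (x t) ≤ C * (b - a) := by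
  have hC : 0 ≤ C := (norm_nonneg _).trans (hbound s hs)
  have hst : ‖t - s‖ ≤ b - a := by
    rw [Real.norm_eq_abs, abs_sub_le_iff]; constructor <;> linarith [hs.1, hs.2, ht.1, ht.2]
  calc dist (x s) (x t) = ‖x t - x s‖ := dist_eq_norm' _ _
    _ ≤ C * ‖t - s‖ := (convex_Icc a b).norm_image_sub_le_of_norm_hasDerivWithin_le
        (fun u _ => (hderiv u).hasDerivWithinAt) hbound hs ht
    _ ≤ C * (b - a) := by gcongr

theorem norm_intervalIntegral_le_of_intervalIntegral_eq_zero {f g : ℝ → E} {T r : ℝ}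
    (hT : 0 ≤ T) (hf : IntervalIntegrable f volume 0 T) (hg : IntervalIntegrable g volume 0 T)
    (hg0 : ∫ s in (0 : ℝ)..T, g s = 0) (hfg : ∀ s ∈ Icc 0 T, dist (f s) (g s) ≤ r) :
    ‖∫ s in (0 : ℝ)..T, f s‖ ≤ r * T :=
  calc ‖∫ s in (0 : ℝ)..T, f s‖ = ‖∫ s in (0 : ℝ)..T, (f s - g s)‖ := by
        rw [intervalIntegral.integral_sub hf hg, hg0, sub_zero]
    _ ≤ r * |T - 0| := intervalIntegral.norm_integral_le_of_norm_le_const fun s hs => by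
        rw [uIoc_of_le hT] at hs
        exact dist_eq_norm (f s) (g s) ▸ hfg s (Ioc_subset_Icc_self hs)
    _ = r * T := by rw [sub_zero, abs_of_nonneg hT]

theorem exists_forall_norm_intervalIntegral_le_of_periodic_solution [CompleteSpace E]
    {F : ℝ → E → ℝ → E} {T ε₀ : ℝ} {S : Set E} (hT : 0 < T) (hε₀ : 0 < ε₀) (hS : IsCompact S)
    (hF : ContinuousOn (fun p : ℝ × E × ℝ => F p.1 p.2.1 p.2.2) (Icc 0 T ×ˢ S ×ˢ Icc 0 ε₀))
    {r : ℝ} (hr : 0 < r) :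
    ∃ ε₁ ∈ Ioc 0 ε₀, ∀ ε ∈ Ioc 0 ε₁, ∀ c ∈ Ioc 0 ε, ∀ x : ℝ → E, Periodic x T →
      (∀ t, HasDerivAt x (c • F t (x t) ε) t) → (∀ t, x t ∈ S) →
      ∀ t, ‖∫ s in (0 : ℝ)..T, F s (x t) 0‖ ≤ r * T := by
  obtain ⟨M₀, hM₀⟩ :=
    (isCompact_Icc.prod (hS.prod isCompact_Icc)).exists_bound_of_continuousOn hF
  obtain ⟨M, hM0, hM⟩ :
      ∃ M, 0 ≤ M ∧ ∀ s ∈ Icc 0 T, ∀ z ∈ S, ∀ e ∈ Icc 0 ε₀, ‖F s z e‖ ≤ M :=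
    ⟨max M₀ 0, le_max_right _ _, fun s hs z hz e he =>
      (hM₀ (s, z, e) ⟨hs, hz, he⟩).trans (le_max_left _ _)⟩
  obtain ⟨η, hη, hmod⟩ :=
    exists_pos_forall_dist_lt_of_continuousOn isCompact_Icc hS isCompact_Icc hF hr
  have hMT : 0 ≤ M * T := mul_nonneg hM0 hT.le
  -- `ε (M T + 2) ≤ η` keeps both the drift `ε M T` of `x` over a period and the shift `ε` of the
  -- parameter below the modulus `η`
  refine ⟨min ε₀ (η / (M * T + 2)), ⟨by positivity, min_le_left _ _⟩, ?_⟩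
  rintro ε ⟨hε, hεε₁⟩ c ⟨hc, hcε⟩ x hx hderiv hxS t
  have hεη : ε * (M * T + 2) ≤ η :=
    (le_div_iff₀ (by positivity)).1 (hεε₁.trans (min_le_right _ _))
  have hεMT : ε * M * T < η := by nlinarith
  have hεltη : ε < η := by nlinarith
  have hεIcc : ε ∈ Icc 0 ε₀ := ⟨hε.le, hεε₁.trans (min_le_left _ _)⟩
  have h0Icc : (0 : ℝ) ∈ Icc 0 ε₀ := ⟨le_rfl, hε₀.le⟩
  have hFx : ContinuousOn (fun s => F s (x s) ε) (Icc 0 T) :=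
    hF.comp (continuousOn_id.prodMk ((continuous_iff_continuousAt.2 fun t =>
      (hderiv t).continuousAt).continuousOn.prodMk continuousOn_const)) fun s hs =>
        ⟨hs, hxS s, hεIcc⟩
  obtain ⟨t', ht', hxt⟩ := hx.exists_mem_Ico₀ hT t
  rw [hxt]
  have hFz : ContinuousOn (fun s => F s (x t') 0) (Icc 0 T) :=
    hF.comp (continuousOn_id.prodMk (continuousOn_const (c := (x t', (0 : ℝ)))))
      fun s hs => ⟨hs, hxS t', h0Icc⟩
  have hdisp : ∀ s ∈ Icc 0 T, dist (x t') (x s) ≤ ε * M * T := fun s hs =>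
    dist_le_of_hasDerivAt_of_norm_le hderiv (fun u hu => by
      rw [norm_smul, Real.norm_of_nonneg hc.le]
      exact mul_le_mul hcε (hM u hu _ (hxS u) ε hεIcc) (norm_nonneg _) hε.le)
      (Ico_subset_Icc_self ht') hs |>.trans_eq (by rw [sub_zero])
  have hFx_int : IntervalIntegrable (fun s => F s (x s) ε) volume 0 T :=
    hFx.intervalIntegrable_of_Icc hT.le
  refine norm_intervalIntegral_le_of_intervalIntegral_eq_zero hT.le
    (hFz.intervalIntegrable_of_Icc hT.le) hFx_int
    (intervalIntegral_eq_zero_of_periodic_of_hasDerivAt hc.ne' hx hderiv hFx_int)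
    fun s hs => (hmod s hs _ (hxS t') _ (hxS s) 0 h0Icc ε hεIcc
      ((hdisp s hs).trans_lt hεMT) ?_).le
  rwa [Real.dist_eq, zero_sub, abs_neg, abs_of_pos hε]

end

theorem stmt_2_general (n : ℕ) (D : Set (EuclideanSpace ℝ (Fin n)))
    (ε₀ T : ℝ) (hε₀ : 0 < ε₀) (hT : 0 < T)
    (F : ℝ → EuclideanSpace ℝ (Fin n) → ℝ → EuclideanSpace ℝ (Fin n))
    (hFcont : ContinuousOn
      (fun p : ℝ × EuclideanSpace ℝ (Fin n) × ℝ => F p.1 p.2.1 p.2.2)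
      (Set.univ ×ˢ D ×ˢ Set.Icc 0 ε₀))
    (f₁ : EuclideanSpace ℝ (Fin n) → EuclideanSpace ℝ (Fin n))
    (hf₁ : ∀ z, f₁ z = (1 / T) • ∫ s in (0:ℝ)..T, F s z 0)
    (zstar : EuclideanSpace ℝ (Fin n))
    (V : Set (EuclideanSpace ℝ (Fin n))) (hVopen : IsOpen V)
    (hVbdd : Bornology.IsBounded V) (hzV : zstar ∈ V) (hVD : closure V ⊆ D)
    (hf₁ne : ∀ z ∈ closure V \ {zstar}, f₁ z ≠ 0) :
    ∃ ε₁ ∈ Set.Ioc 0 ε₀, ∀ l ∈ Set.Ioc (0:ℝ) 1, ∀ ε ∈ Set.Ioc (0:ℝ) ε₁,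
      ∀ x : ℝ → EuclideanSpace ℝ (Fin n),
        Function.Periodic x T → ContDiff ℝ 1 x → (∀ t, x t ∈ D) →
        (∀ t, HasDerivAt x ((ε * l) • F t (x t) ε) t) →
        (∀ t, x t ∈ closure V) → ∀ t, x t ∈ V := by
  have hclV : IsCompact (closure V) := hVbdd.isCompact_closure
  have hf₁cont : ContinuousOn f₁ (closure V) := by
    rw [funext hf₁]
    refine (continuousOn_intervalIntegral_of_continuousOn_prod
      (G := fun s z => F s z 0) ?_ 0 T).const_smul (1 / T)
    exact hFcont.comp (f := fun p : ℝ × _ => (p.1, p.2, (0 : ℝ))) (by fun_prop)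
      fun p hp => ⟨trivial, hVD hp.2, le_rfl, hε₀.le⟩
  obtain ⟨δ, hδ, hδle⟩ :=
    (hclV.diff hVopen).exists_forall_le' (hf₁cont.mono sdiff_subset).norm
      fun z hz => norm_pos_iff.2 (hf₁ne z ⟨hz.1, fun h => hz.2 (h ▸ hzV)⟩)
  obtain ⟨ε₁, hε₁, hsmall⟩ :=
    exists_forall_norm_intervalIntegral_le_of_periodic_solution hT hε₀ hclV
      (hFcont.mono fun p hp => ⟨trivial, hVD hp.2.1, hp.2.2⟩) (half_pos hδ)
  refine ⟨ε₁, hε₁, fun l hl ε hε x hx _ _ hderiv hxV t => by_contra fun hxt => ?_⟩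
  have hle := hsmall ε hε (ε * l) ⟨mul_pos hε.1 hl.1, mul_le_of_le_one_right hε.1.le hl.2⟩
    x hx hderiv hxV t
  have : ‖f₁ (x t)‖ ≤ δ / 2 := by
    rw [hf₁, norm_smul, Real.norm_of_nonneg (by positivity)]
    calc 1 / T * ‖_‖ ≤ 1 / T * (δ / 2 * T) := by gcongr
      _ = δ / 2 := by field_simp
  linarith [hδle (x t) ⟨hxV t, hxt⟩]

/-- For `ℓ = 1`: an isolated zero `z*` of the first averaged function
`f₁(z) = (1/T) ∫₀ᵀ F(s, z, 0) ds` on `closure V` forces hypothesis (H): there is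
`ε₁ ∈ (0, ε₀]` such that for every `λ ∈ (0,1]` and `ε ∈ (0, ε₁]`, any `T`-periodic
solution of `x' = ε λ F(t, x, ε)` contained in `closure V` is contained in `V`. -/
theorem stmt_2 (n : ℕ) (D : Set (EuclideanSpace ℝ (Fin n))) (hD : IsOpen D)
    (ε₀ T : ℝ) (hε₀ : 0 < ε₀) (hT : 0 < T)
    (F : ℝ → EuclideanSpace ℝ (Fin n) → ℝ → EuclideanSpace ℝ (Fin n))
    (hFcont : ContinuousOn
      (fun p : ℝ × EuclideanSpace ℝ (Fin n) × ℝ => F p.1 p.2.1 p.2.2)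
      (Set.univ ×ˢ D ×ˢ Set.Icc 0 ε₀))
    (hFper : ∀ t z e, F (t + T) z e = F t z e)
    (f₁ : EuclideanSpace ℝ (Fin n) → EuclideanSpace ℝ (Fin n))
    (hf₁ : ∀ z, f₁ z = (1 / T) • ∫ s in (0:ℝ)..T, F s z 0)
    (zstar : EuclideanSpace ℝ (Fin n)) (hzD : zstar ∈ D)
    (V : Set (EuclideanSpace ℝ (Fin n))) (hVopen : IsOpen V)
    (hVbdd : Bornology.IsBounded V) (hzV : zstar ∈ V) (hVD : closure V ⊆ D)
    (hf₁ne : ∀ z ∈ closure V \ {zstar}, f₁ z ≠ 0) :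
    ∃ ε₁ ∈ Set.Ioc 0 ε₀, ∀ l ∈ Set.Ioc (0:ℝ) 1, ∀ ε ∈ Set.Ioc (0:ℝ) ε₁,
      ∀ x : ℝ → EuclideanSpace ℝ (Fin n),
        Function.Periodic x T → ContDiff ℝ 1 x → (∀ t, x t ∈ D) →
        (∀ t, HasDerivAt x ((ε * l) • F t (x t) ε) t) →
        (∀ t, x t ∈ closure V) → ∀ t, x t ∈ V :=
  stmt_2_general n D ε₀ T hε₀ hT F hFcont f₁ hf₁ zstar V hVopen hVbdd hzV hVD hf₁ne
end

section
/- Let D ⊆ ℝⁿ be open, ε₀ > 0, T > 0, and let F : ℝ × D × [0, ε₀] → ℝⁿ be continuous and T-periodic in its first variable. Let V ⊆ ℝⁿ be a bounded open set with closure(V) ⊆ D. Suppose (ε_m) ⊆ (0, ε₀] with ε_m → 0, (λ_m) ⊆ (0, 1], and for each m, x_m : ℝ → ℝⁿ is a T-periodic solution of x' = ε_m λ_m F(t, x, ε_m) with x_m(t) ∈ closure(V) for all t and x_m(t_m) ∈ ∂V for some t_m ∈ [0, T]. Then there exist a subsequence (x_{m_i}) and a point z₀ ∈ ∂V such that x_{m_i}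 converges to the constant function z₀ uniformly on [0, T]. -/
open MeasureTheory

/-- Remark 1.1 (Arzelà–Ascoli step): if `x_m` are `T`-periodic solutions of
`x' = ε_m λ_m F(t, x, ε_m)` with values in `closure V`, touching `∂V`, and `ε_m → 0`,
then some subsequence converges uniformly on `[0, T]` to a constant function with
value in `∂V`. -/
theorem stmt_3 (n : ℕ) (D : Set (EuclideanSpace ℝ (Fin n))) (hD : IsOpen D)
    (ε₀ T : ℝ) (hε₀ : 0 < ε₀) (hT : 0 < T)
    (F : ℝ → EuclideanSpace ℝ (Fin n) → ℝ → EuclideanSpace ℝ (Fin n))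
    (hFcont : ContinuousOn
      (fun p : ℝ × EuclideanSpace ℝ (Fin n) × ℝ => F p.1 p.2.1 p.2.2)
      (Set.univ ×ˢ D ×ˢ Set.Icc 0 ε₀))
    (hFper : ∀ t z e, F (t + T) z e = F t z e)
    (V : Set (EuclideanSpace ℝ (Fin n))) (hVopen : IsOpen V)
    (hVbdd : Bornology.IsBounded V) (hVD : closure V ⊆ D)
    (εm : ℕ → ℝ) (hεm : ∀ m, εm m ∈ Set.Ioc 0 ε₀)
    (hεm0 : Filter.Tendsto εm Filter.atTop (nhds 0))
    (lm : ℕ → ℝ) (hlm : ∀ m, lm m ∈ Set.Ioc (0:ℝ) 1)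
    (x : ℕ → ℝ → EuclideanSpace ℝ (Fin n))
    (hxper : ∀ m, Function.Periodic (x m) T)
    (hxC1 : ∀ m, ContDiff ℝ 1 (x m))
    (hxD : ∀ m t, x m t ∈ D)
    (hxode : ∀ m t, HasDerivAt (x m) ((εm m * lm m) • F t (x m t) (εm m)) t)
    (hxV : ∀ m t, x m t ∈ closure V)
    (hxbd : ∀ m, ∃ tm ∈ Set.Icc (0:ℝ) T, x m tm ∈ frontier V) :
    ∃ φ : ℕ → ℕ, StrictMono φ ∧ ∃ z₀ ∈ frontier V,
      TendstoUniformlyOn (fun i t => x (φ i) t) (fun _ => z₀) Filter.atTop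
        (Set.Icc 0 T) := by
  classical
  choose tm htm hfr using hxbd
  -- compactness of closure V and frontier V
  have hcV : IsCompact (closure V) := hVbdd.isCompact_closure
  have hfrc : IsCompact (frontier V) :=
    hcV.of_isClosed_subset isClosed_frontier (frontier_subset_closure)
  -- bound on F over the compact set
  have hK : IsCompact ((Set.Icc (0:ℝ) T) ×ˢ (closure V) ×ˢ (Set.Icc 0 ε₀)) :=
    (isCompact_Icc).prod (hcV.prod isCompact_Icc)
  have hsub : (Set.Icc (0:ℝ) T) ×ˢ (closure V) ×ˢ (Set.Icc 0 ε₀) ⊆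
      Set.univ ×ˢ D ×ˢ Set.Icc 0 ε₀ := by
    intro p hp
    exact ⟨Set.mem_univ _, hVD hp.2.1, hp.2.2⟩
  obtain ⟨M0, hM0⟩ := hK.exists_bound_of_continuousOn (hFcont.mono hsub)
  set M : ℝ := max M0 0 with hMdef
  have hMnn : 0 ≤ M := le_max_right _ _
  have hM : ∀ t ∈ Set.Icc (0:ℝ) T, ∀ m, ‖F t (x m t) (εm m)‖ ≤ M := by
    intro t ht m
    refine le_trans (hM0 (t, x m t, εm m) ⟨ht, hxV m t, ⟨(hεm m).1.le, (hεm m).2⟩⟩)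
      (le_max_left _ _)
  -- Lipschitz-type bound
  have hlip : ∀ m, ∀ s ∈ Set.Icc (0:ℝ) T, ∀ t ∈ Set.Icc (0:ℝ) T,
      ‖x m t - x m s‖ ≤ (εm m * M) * ‖t - s‖ := by
    intro m s hs t ht
    refine Convex.norm_image_sub_le_of_norm_hasDerivWithin_le
      (f := x m) (f' := fun u => (εm m * lm m) • F u (x m u) (εm m))
      (fun u hu => (hxode m u).hasDerivWithinAt) ?_ (convex_Icc 0 T) hs ht
    intro u hu
    rw [norm_smul, Real.norm_eq_abs, abs_of_pos (mul_pos (hεm m).1 (hlm m).1)]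
    have h1 : ‖F u (x m u) (εm m)‖ ≤ M := hM u hu m
    have h2 : εm m * lm m ≤ εm m := by
      nlinarith [(hεm m).1, (hlm m).2]
    calc εm m * lm m * ‖F u (x m u) (εm m)‖ ≤ εm m * ‖F u (x m u) (εm m)‖ :=
          mul_le_mul_of_nonneg_right h2 (norm_nonneg _)
      _ ≤ εm m * M := mul_le_mul_of_nonneg_left h1 (hεm m).1.le
  -- extract subsequence converging to z₀ ∈ frontier V
  obtain ⟨z₀, hz₀, φ, hφ, hconv⟩ := hfrc.tendsto_subseq (fun m => hfr m)
  refine ⟨φ, hφ, z₀, hz₀, ?_⟩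
  rw [Metric.tendstoUniformlyOn_iff]
  intro ε hε
  have hε2 : 0 < ε / 2 := by linarith
  have h1 : Filter.Tendsto (fun i => εm (φ i) * M * T) Filter.atTop (nhds 0) := by
    have := ((hεm0.comp hφ.tendsto_atTop).mul_const M).mul_const T
    simpa using this
  have h1' := (h1.eventually (gt_mem_nhds hε2))
  have h2' := (hconv.eventually (Metric.ball_mem_nhds z₀ hε2))
  filter_upwards [h1', h2'] with i hi1 hi2 t ht
  have htm : tm (φ i) ∈ Set.Icc (0:ℝ) T := htm (φ i)
  have hd1 : dist z₀ (x (φ i) (tm (φ i))) < ε / 2 := by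
    rw [dist_comm]; exact hi2
  have hd2 : dist (x (φ i) (tm (φ i))) (x (φ i) t) ≤ εm (φ i) * M * T := by
    rw [dist_eq_norm]
    calc ‖x (φ i) (tm (φ i)) - x (φ i) t‖ ≤ (εm (φ i) * M) * ‖tm (φ i) - t‖ :=
          hlip (φ i) t ht (tm (φ i)) htm
      _ ≤ (εm (φ i) * M) * T := by
          refine mul_le_mul_of_nonneg_left ?_ (mul_nonneg (hεm (φ i)).1.le hMnn)
          rw [Real.norm_eq_abs, abs_le]
          constructor <;> [linarith [ht.1, ht.2, htm.1, htm.2];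
            linarith [ht.1, ht.2, htm.1, htm.2]]
  calc dist z₀ (x (φ i) t) ≤ dist z₀ (x (φ i) (tm (φ i))) +
        dist (x (φ i) (tm (φ i))) (x (φ i) t) := dist_triangle _ _ _
    _ < ε / 2 + εm (φ i) * M * T := by linarith
    _ < ε / 2 + ε / 2 := by linarith
    _ = ε := by ring
end

section
/- Let D ⊆ ℝⁿ be open, ε₀ > 0, T > 0, and let F : ℝ × D × [0, ε₀] → ℝⁿ be continuous and T-periodic in its first variable. Let V ⊆ ℝⁿ be a bounded open set with closure(V) ⊆ D and let ε₁ ∈ (0, ε₀]. Assume: (i) (hypothesis (H)) for each λ ∈ (0, 1] and ε ∈ (0, ε₁], any T-periodic solution of x' = ε λ F(t, x, ε) taking values in closure(V) takes values in V; and (ii) for every z ∈ ∂V and ε ∈ (0, ε₁], ∫₀ᵀ F(s, z, ε) ds ≠ 0. Then there exists ε₁' ∈ (0, ε₁] such that for every ε ∈ (0, ε₁'], every λ ∈ [0, 1], and every continuous x : [0, T] → ℝⁿ with x(0) = x(T), x(t) ∈ closure(V) for all t, and x(t₀) ∈ ∂V for some t₀ ∈ [0, T], there exists t ∈ [0, T]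 with x(t) − x(0) + (λ ε t / T + 1) ∫₀ᵀ F(s, x(s), ε) ds − λ ε ∫₀ᵗ F(s, x(s), ε) ds ≠ 0. -/
/-!
One can take `ε₁' = ε₁`. If the homotopy expression vanished for every `t ∈ [0, T]`, then
`t = 0` gives `∫₀ᵀ F(s, x(s), ε) ds = 0`, so `x` solves `x(t) = x(0) + λε ∫₀ᵗ F(s, x(s), ε) ds`
on `[0, T]`. For `λ = 0` the loop `x` is constant at a point of `∂V`, contradicting (ii). For
`λ > 0` its `T`-periodic extension is a `C¹` periodic solution of `x' = ελF(t, x, ε)` in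
`closure V` that meets `∂V`, contradicting (H).
-/

open MeasureTheory Set Function

theorem Function.Periodic.eq_of_eqOn_Icc {α : Type*} {T : ℝ} {f g : ℝ → α}
    (hf : Periodic f T) (hg : Periodic g T) (hT : 0 < T) (hfg : EqOn f g (Icc 0 T)) :
    f = g := by
  funext t
  have hpair : Periodic (fun t => (f t, g t)) T := fun t => by simp only [hf t, hg t]
  obtain ⟨s, hs, hts⟩ := hpair.exists_mem_Ico₀ hT t
  obtain ⟨hft, hgt⟩ := Prod.mk.inj hts
  rw [hft, hgt, hfg (Ico_subset_Icc_self hs)]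

theorem Function.Periodic.range_subset_of_mapsTo_Icc {α : Type*} {T : ℝ} {f g : ℝ → α}
    {S : Set α} (hf : Periodic f T) (hT : 0 < T) (hfg : EqOn f g (Icc 0 T))
    (hg : MapsTo g (Icc 0 T) S) : range f ⊆ S := by
  rw [← hf.image_Icc hT 0, zero_add, hfg.image_eq]
  exact hg.image_subset

theorem exists_continuous_periodic_eqOn_Icc {α : Type*} [TopologicalSpace α] {T : ℝ}
    (hT : 0 < T) {x : ℝ → α} (hx : ContinuousOn x (Icc 0 T)) (hx0T : x 0 = x T) :
    ∃ y : ℝ → α, Continuous y ∧ Periodic y T ∧ EqOn y x (Icc 0 T) := by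
  have : Fact (0 < T) := ⟨hT⟩
  set y : ℝ → α := fun t => AddCircle.liftIco T 0 x t
  have hyper : Periodic y T := fun t => by simp only [y, AddCircle.coe_add_period]
  have hyx : EqOn y x (Ico 0 T) := fun t ht => AddCircle.liftIco_zero_coe_apply ht
  refine ⟨y, (AddCircle.liftIco_zero_continuous hx0T hx).comp continuous_quotient_mk',
    hyper, fun t ht => ?_⟩
  rcases ht.2.lt_or_eq with htT | rfl
  · exact hyx ⟨ht.1, htT⟩
  · rw [← zero_add t, hyper 0, hyx ⟨le_rfl, hT⟩, hx0T, zero_add]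

section PeriodicSolution

variable {E : Type*} [NormedAddCommGroup E] [NormedSpace ℝ E] {T : ℝ}

theorem Function.Periodic.periodic_intervalIntegral_of_integral_eq_zero {h : ℝ → E}
    (hh : Periodic h T) (hint : ∀ a b, IntervalIntegrable h volume a b)
    (h0 : ∫ s in 0..T, h s = 0) :
    Periodic (fun t => ∫ s in 0..t, h s) T := fun t => by
  simp only [hh.intervalIntegral_add_eq_add 0 t hint, zero_add, h0, add_zero]

theorem exists_periodic_solution_of_integral_eq [CompleteSpace E] {S : Set E} {G : ℝ → E → E}
    (hT : 0 < T) (hG : ContinuousOn (fun p : ℝ × E => G p.1 p.2) (univ ×ˢ S))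
    (hGper : ∀ t z, G (t + T) z = G t z) {x : ℝ → E} (hx : ContinuousOn x (Icc 0 T))
    (hxS : MapsTo x (Icc 0 T) S) (hx0T : x 0 = x T)
    (hxeq : ∀ t ∈ Icc 0 T, x t = x 0 + ∫ s in 0..t, G s (x s)) :
    ∃ y : ℝ → E, Periodic y T ∧ ContDiff ℝ 1 y ∧ (∀ t, HasDerivAt y (G t (y t)) t) ∧
      EqOn y x (Icc 0 T) := by
  obtain ⟨x', hx'c, hx'per, hx'x⟩ := exists_continuous_periodic_eqOn_Icc hT hx hx0T
  have hx'S := hx'per.range_subset_of_mapsTo_Icc hT hx'x hxS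
  -- Evaluating `G` along `x'` rather than `x` makes the integrand continuous and periodic on `ℝ`.
  set h : ℝ → E := fun t => G t (x' t)
  have hh : Continuous h :=
    hG.comp_continuous (continuous_id.prodMk hx'c) fun t => ⟨trivial, hx'S (mem_range_self t)⟩
  have hhper : Periodic h T := fun t => by simp only [h, hGper, hx'per t]
  have hhx : ∀ t ∈ Icc 0 T, ∫ s in 0..t, h s = ∫ s in 0..t, G s (x s) := fun t ht =>
    intervalIntegral.integral_congr fun s hs => by
      rw [uIcc_of_le ht.1] at hs
      simp only [h, hx'x ⟨hs.1, hs.2.trans ht.2⟩]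
  have hh0 : ∫ s in 0..T, h s = 0 := by
    have hxT := hxeq T ⟨hT.le, le_rfl⟩
    rwa [← hx0T, left_eq_add, ← hhx T ⟨hT.le, le_rfl⟩] at hxT
  set y : ℝ → E := fun t => x 0 + ∫ s in 0..t, h s
  have hyder : ∀ t, HasDerivAt y (h t) t := fun t =>
    (hh.integral_hasStrictDerivAt 0 t).hasDerivAt.const_add (x 0)
  have hyper : Periodic y T := fun t => by
    simp only [y, hhper.periodic_intervalIntegral_of_integral_eq_zero hh.intervalIntegrable hh0 t]
  have hyx : EqOn y x (Icc 0 T) := fun t ht => by simp only [y, hhx t ht, ← hxeq t ht]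
  have hyx' : y = x' := hyper.eq_of_eqOn_Icc hx'per hT (hyx.trans hx'x.symm)
  refine ⟨y, hyper, contDiff_one_iff_deriv.2 ⟨fun t => (hyder t).differentiableAt, ?_⟩,
    fun t => ?_, hyx⟩
  · rwa [funext fun t => (hyder t).deriv]
  · simpa only [hyx'] using hyder t

end PeriodicSolution

theorem stmt_10_general (n : ℕ) (D : Set (EuclideanSpace ℝ (Fin n)))
    (ε₀ T : ℝ) (hT : 0 < T)
    (F : ℝ → EuclideanSpace ℝ (Fin n) → ℝ → EuclideanSpace ℝ (Fin n))
    (hFcont : ContinuousOn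
      (fun p : ℝ × EuclideanSpace ℝ (Fin n) × ℝ => F p.1 p.2.1 p.2.2)
      (Set.univ ×ˢ D ×ˢ Set.Icc 0 ε₀))
    (hFper : ∀ t z e, F (t + T) z e = F t z e)
    (V : Set (EuclideanSpace ℝ (Fin n))) (hVopen : IsOpen V)
    (hVD : closure V ⊆ D)
    (ε₁ : ℝ) (hε₁ : ε₁ ∈ Set.Ioc 0 ε₀)
    -- (i) hypothesis (H)
    (hH : ∀ l ∈ Set.Ioc (0:ℝ) 1, ∀ ε ∈ Set.Ioc (0:ℝ) ε₁,
      ∀ x : ℝ → EuclideanSpace ℝ (Fin n),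
        Function.Periodic x T → ContDiff ℝ 1 x → (∀ t, x t ∈ D) →
        (∀ t, HasDerivAt x ((ε * l) • F t (x t) ε) t) →
        (∀ t, x t ∈ closure V) → ∀ t, x t ∈ V)
    -- (ii) nonvanishing of the averaged integral on the boundary of V
    (hbd : ∀ z ∈ frontier V, ∀ ε ∈ Set.Ioc (0:ℝ) ε₁,
      (∫ s in (0:ℝ)..T, F s z ε) ≠ 0) :
    ∃ ε₁' ∈ Set.Ioc 0 ε₁, ∀ ε ∈ Set.Ioc (0:ℝ) ε₁', ∀ l ∈ Set.Icc (0:ℝ) 1,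
      ∀ x : ℝ → EuclideanSpace ℝ (Fin n),
        ContinuousOn x (Set.Icc 0 T) → x 0 = x T →
        (∀ t ∈ Set.Icc (0:ℝ) T, x t ∈ closure V) →
        (∃ t₀ ∈ Set.Icc (0:ℝ) T, x t₀ ∈ frontier V) →
        ∃ t ∈ Set.Icc (0:ℝ) T,
          x t - x 0 + (l * ε * t / T + 1) • (∫ s in (0:ℝ)..T, F s (x s) ε)
            - (l * ε) • (∫ s in (0:ℝ)..t, F s (x s) ε) ≠ 0 := by
  refine ⟨ε₁, ⟨hε₁.1, le_rfl⟩, ?_⟩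
  rintro ε hε l ⟨hl0, hl1⟩ x hx hx0T hxV ⟨t₀, ht₀, hxt₀⟩
  by_contra! hzero
  have hI : ∫ s in 0..T, F s (x s) ε = 0 := by simpa using hzero 0 ⟨le_rfl, hT.le⟩
  have hxeq : ∀ t ∈ Icc 0 T, x t = x 0 + ∫ s in 0..t, (ε * l) • F s (x s) ε := fun t ht => by
    rw [intervalIntegral.integral_smul, mul_comm, ← sub_eq_zero, ← hzero t ht, hI]
    module
  rcases hl0.eq_or_lt with rfl | hl
  · have hconst : ∫ s in 0..T, F s (x s) ε = ∫ s in 0..T, F s (x t₀) ε :=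
      intervalIntegral.integral_congr fun s hs => by
        rw [uIcc_of_le hT.le] at hs
        simp only [hxeq s hs, hxeq t₀ ht₀, mul_zero, zero_smul, intervalIntegral.integral_zero]
    exact hbd (x t₀) hxt₀ ε hε (hconst ▸ hI)
  · have hεF : ContinuousOn (fun p : ℝ × EuclideanSpace ℝ (Fin n) => F p.1 p.2 ε) (univ ×ˢ D) :=
      hFcont.comp (continuousOn_fst.prodMk (continuousOn_snd.prodMk continuousOn_const))
        fun p hp => ⟨trivial, hp.2, hε.1.le, hε.2.trans hε₁.2⟩
    obtain ⟨y, hyper, hyC1, hyder, hyx⟩ := exists_periodic_solution_of_integral_eq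
      (G := fun t z => (ε * l) • F t z ε) hT (hεF.const_smul (ε * l))
      (fun t z => by rw [hFper]) hx (fun t ht => hVD (hxV t ht)) hx0T hxeq
    have hyV := hyper.range_subset_of_mapsTo_Icc hT hyx hxV
    have hyt₀ := hH l ⟨hl, hl1⟩ ε hε y hyper hyC1 (fun t => hVD (hyV ⟨t, rfl⟩)) hyder
      (fun t => hyV ⟨t, rfl⟩) t₀
    rw [hyx ht₀] at hyt₀
    exact hxt₀.2 (hVopen.interior_eq.symm ▸ hyt₀)

/-- Condition (C) in the proof of Theorem A: under hypothesis (H) and nonvanishing of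
`∫₀ᵀ F(s, z, ε) ds` on `∂V`, there is `ε₁' ∈ (0, ε₁]` such that for all `ε ∈ (0, ε₁']`,
`λ ∈ [0, 1]`, and continuous `x : [0,T] → closure V` with `x(0) = x(T)` touching `∂V`,
the homotopy expression
`x(t) − x(0) + (λεt/T + 1)∫₀ᵀ F(s,x(s),ε) ds − λε ∫₀ᵗ F(s,x(s),ε) ds`
is nonzero for some `t ∈ [0, T]`. -/
theorem stmt_10 (n : ℕ) (D : Set (EuclideanSpace ℝ (Fin n))) (hD : IsOpen D)
    (ε₀ T : ℝ) (hε₀ : 0 < ε₀) (hT : 0 < T)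
    (F : ℝ → EuclideanSpace ℝ (Fin n) → ℝ → EuclideanSpace ℝ (Fin n))
    (hFcont : ContinuousOn
      (fun p : ℝ × EuclideanSpace ℝ (Fin n) × ℝ => F p.1 p.2.1 p.2.2)
      (Set.univ ×ˢ D ×ˢ Set.Icc 0 ε₀))
    (hFper : ∀ t z e, F (t + T) z e = F t z e)
    (V : Set (EuclideanSpace ℝ (Fin n))) (hVopen : IsOpen V)
    (hVbdd : Bornology.IsBounded V) (hVD : closure V ⊆ D)
    (ε₁ : ℝ) (hε₁ : ε₁ ∈ Set.Ioc 0 ε₀)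
    -- (i) hypothesis (H)
    (hH : ∀ l ∈ Set.Ioc (0:ℝ) 1, ∀ ε ∈ Set.Ioc (0:ℝ) ε₁,
      ∀ x : ℝ → EuclideanSpace ℝ (Fin n),
        Function.Periodic x T → ContDiff ℝ 1 x → (∀ t, x t ∈ D) →
        (∀ t, HasDerivAt x ((ε * l) • F t (x t) ε) t) →
        (∀ t, x t ∈ closure V) → ∀ t, x t ∈ V)
    -- (ii) nonvanishing of the averaged integral on the boundary of V
    (hbd : ∀ z ∈ frontier V, ∀ ε ∈ Set.Ioc (0:ℝ) ε₁,
      (∫ s in (0:ℝ)..T, F s z ε) ≠ 0) :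
    ∃ ε₁' ∈ Set.Ioc 0 ε₁, ∀ ε ∈ Set.Ioc (0:ℝ) ε₁', ∀ l ∈ Set.Icc (0:ℝ) 1,
      ∀ x : ℝ → EuclideanSpace ℝ (Fin n),
        ContinuousOn x (Set.Icc 0 T) → x 0 = x T →
        (∀ t ∈ Set.Icc (0:ℝ) T, x t ∈ closure V) →
        (∃ t₀ ∈ Set.Icc (0:ℝ) T, x t₀ ∈ frontier V) →
        ∃ t ∈ Set.Icc (0:ℝ) T,
          x t - x 0 + (l * ε * t / T + 1) • (∫ s in (0:ℝ)..T, F s (x s) ε)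
            - (l * ε) • (∫ s in (0:ℝ)..t, F s (x s) ε) ≠ 0 :=
  stmt_10_general n D ε₀ T hT F hFcont hFper V hVopen hVD ε₁ hε₁ hH hbd
end

section
/- Let k be a positive integer, 0 < α < 1, ε₀ > 0, and let R : ℝ × ℝ × [0, ε₀] → ℝ be continuous and 2π-periodic in its first variable. Define F : ℝ × ℝ × [0, ε₀] → ℝ by F(θ, r, ε) = Σ_{i=1}^{k−1} ε^{i−1} r^{i+1} cos^{i−1}(θ) sin(θ) + ε^{k−1} r (rᵏ cos^{k−1}(θ) + ∛(r² − 1) sin(θ)) sin(θ) + εᵏ R(θ, r, ε), where ∛ denotes the real cube root. Then there exists ε₁ ∈ (0, ε₀] such that for every λ ∈ (0, 1] and ε ∈ (0, ε₁], every 2π-periodic continuously differentiable function r : ℝ → ℝ satisfying r'(θ) = ε λ F(θ, r(θ), ε) and r(θ) ∈ [1 − α, 1 + α] for all θ, in fact satisfies r(θ) ∈ (1 − α, 1 + α) for all θ. -/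
/-!
Integrating `r' = ελF` over a period gives `∫ F(θ, r θ, ε) dθ = 0`. Integration by parts turns a
moment `∫ cos^p θ sin θ r^(q+1)` into `ε` times `∫ cos^(p+1) θ r^q F`, and expanding `F` there
produces moments of the same shape plus a term of order `ε^(k-1)`; iterating, every moment is
`O(ε^d)` for `d ≤ k`. Hence the polynomial part of `F` integrates to `O(ε^k)`, which leaves
`∫ r ∛(r² - 1) sin² θ = O(ε)`. Since also `r' = O(ε)`, a solution touching `1 + α` (or `1 - α`)
stays within `α / 2` of it, where `r ∛(r² - 1)` keeps a sign and is at least `(1 - α) ∛(α / 2)`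
in absolute value, so the same integral is at least `(1 - α) ∛(α / 2) π`: impossible for small `ε`.
-/

open Real Filter Topology

noncomputable section

def moment (r : ℝ → ℝ) (p q : ℕ) : ℝ :=
  ∫ θ in (0)..(2 * π), cos θ ^ p * sin θ * r θ ^ q

/-- The terms `∑_{i=1}^{k} ε^(i-1) x^(i+1) cos^(i-1) θ sin θ` of `F`, reindexed from `0`. -/
def cosSinPoly (k : ℕ) (ε θ x : ℝ) : ℝ :=
  ∑ i ∈ Finset.range k, ε ^ i * (cos θ ^ i * sin θ * x ^ (i + 2))

structure IsNearPolySolution (k : ℕ) (B H ε c : ℝ) (r f : ℝ → ℝ) : Prop where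
  periodic : Function.Periodic r (2 * π)
  hasDerivAt : ∀ θ, HasDerivAt r (c * f θ) θ
  continuous_rhs : Continuous f
  abs_le : ∀ θ, |r θ| ≤ B
  pos : 0 < ε
  le_one : ε ≤ 1
  abs_coeff_le : |c| ≤ ε
  abs_sub_cosSinPoly_le : ∀ θ, |f θ - cosSinPoly k ε θ (r θ)| ≤ H * ε ^ (k - 1)

end

theorem moment_zero_right (r : ℝ → ℝ) (p : ℕ) : moment r p 0 = 0 := by
  have := integral_sin_pow_odd_mul_cos_pow (a := 0) (b := 2 * π) 0 p
  rw [cos_two_pi, cos_zero, intervalIntegral.integral_same] at this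
  simpa [moment, mul_comm] using this

theorem Function.Periodic.integral_deriv_eq_zero {r r' : ℝ → ℝ} {T : ℝ}
    (hper : Function.Periodic r T) (hr : ∀ θ, HasDerivAt r (r' θ) θ) (hr' : Continuous r') :
    ∫ θ in (0)..T, r' θ = 0 := by
  rw [intervalIntegral.integral_eq_sub_of_hasDerivAt (fun θ _ => hr θ) (hr'.intervalIntegrable _ _)]
  simpa using sub_eq_zero.2 (hper 0)

theorem moment_succ_eq {r r' : ℝ → ℝ} (hper : Function.Periodic r (2 * π))
    (hr : ∀ θ, HasDerivAt r (r' θ) θ) (hr' : Continuous r') (p q : ℕ) :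
    (p + 1) * moment r p (q + 1)
      = (q + 1) * ∫ θ in (0)..(2 * π), cos θ ^ (p + 1) * r θ ^ q * r' θ := by
  have hrc : Continuous r := continuous_iff_continuousAt.2 fun θ => (hr θ).continuousAt
  have hprod : Function.Periodic (fun t => cos t ^ (p + 1) * r t ^ (q + 1)) (2 * π) := by
    intro t; simp [hper t]
  have hzero := hprod.integral_deriv_eq_zero
    (r' := fun θ => (q + 1) * (cos θ ^ (p + 1) * r θ ^ q * r' θ)
      - (p + 1) * (cos θ ^ p * sin θ * r θ ^ (q + 1)))
    (fun θ => (((hasDerivAt_cos θ).pow (p + 1)).mul ((hr θ).pow (q + 1))).congr_deriv (by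
      simp only [Pi.pow_apply, Nat.add_sub_cancel]
      push_cast
      ring))
    (by fun_prop)
  rw [intervalIntegral.integral_sub (by apply Continuous.intervalIntegrable; fun_prop)
      (by apply Continuous.intervalIntegrable; fun_prop),
    intervalIntegral.integral_const_mul, intervalIntegral.integral_const_mul] at hzero
  rw [moment]
  linarith

theorem Function.Periodic.abs_sub_le {r r' : ℝ → ℝ} {T M : ℝ} (hper : Function.Periodic r T)
    (hT : 0 < T) (hr : ∀ θ, HasDerivAt r (r' θ) θ) (hM : ∀ θ, |r' θ| ≤ M) (x y : ℝ) :
    |r x - r y| ≤ M * T := by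
  obtain ⟨z, hz, hxz⟩ := hper.exists_mem_Ico hT x y
  have hmvt := norm_image_sub_le_of_norm_deriv_le_segment' (fun t _ => (hr t).hasDerivWithinAt)
    (fun t _ => hM t) z ⟨hz.1, hz.2.le⟩
  rw [hxz, ← Real.norm_eq_abs]
  calc ‖r z - r y‖ ≤ M * (z - y) := hmvt
    _ ≤ M * T := by
      have := hz.2
      gcongr
      · exact (abs_nonneg _).trans (hM 0)
      · linarith

theorem integral_cos_pow_mul_pow_mul_cosSinPoly {r : ℝ → ℝ} (hr : Continuous r) (k p q : ℕ)
    (ε : ℝ) :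
    ∫ θ in (0)..(2 * π), cos θ ^ p * r θ ^ q * cosSinPoly k ε θ (r θ)
      = ∑ i ∈ Finset.range k, ε ^ i * moment r (p + i) (q + i + 2) := by
  simp_rw [cosSinPoly, Finset.mul_sum]
  rw [intervalIntegral.integral_finsetSum fun i _ => by
    apply Continuous.intervalIntegrable; fun_prop]
  refine Finset.sum_congr rfl fun i _ => ?_
  rw [moment, ← intervalIntegral.integral_const_mul]
  congr 1 with θ
  ring

namespace IsNearPolySolution

variable {k : ℕ} {B H ε c : ℝ} {r f : ℝ → ℝ}

theorem continuous (h : IsNearPolySolution k B H ε c r f) : Continuous r :=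
  continuous_iff_continuousAt.2 fun θ => (h.hasDerivAt θ).continuousAt

theorem bound_nonneg (h : IsNearPolySolution k B H ε c r f) : 0 ≤ B :=
  (abs_nonneg _).trans (h.abs_le 0)

theorem remainder_nonneg (h : IsNearPolySolution k B H ε c r f) : 0 ≤ H :=
  nonneg_of_mul_nonneg_left ((abs_nonneg _).trans (h.abs_sub_cosSinPoly_le 0))
    (pow_pos h.pos _)

theorem abs_pow_le (h : IsNearPolySolution k B H ε c r f) (q : ℕ) (θ : ℝ) :
    |r θ ^ q| ≤ B ^ q := by
  rw [abs_pow]; exact pow_le_pow_left₀ (abs_nonneg _) (h.abs_le θ) q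

theorem abs_moment_le (h : IsNearPolySolution k B H ε c r f) (p q : ℕ) :
    |moment r p q| ≤ B ^ q * (2 * π) := by
  have := intervalIntegral.norm_integral_le_of_norm_le_const (a := 0) (b := 2 * π)
    (f := fun θ => cos θ ^ p * sin θ * r θ ^ q) (C := B ^ q) fun θ _ => by
      rw [Real.norm_eq_abs, abs_mul, abs_mul, abs_pow]
      have hcos := pow_le_one₀ (n := p) (abs_nonneg _) (abs_cos_le_one θ)
      have hsin := abs_sin_le_one θ
      have hr := h.abs_pow_le q θ
      calc |cos θ| ^ p * |sin θ| * |r θ ^ q| ≤ 1 * 1 * B ^ q := by gcongr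
        _ = B ^ q := by ring
  simpa [moment, abs_of_pos two_pi_pos] using this

theorem abs_moment_succ_le (h : IsNearPolySolution k B H ε c r f) (p q : ℕ) :
    |moment r p (q + 1)|
      ≤ (q + 1) * ε * |∫ θ in (0)..(2 * π), cos θ ^ (p + 1) * r θ ^ q * f θ| := by
  have hibp := moment_succ_eq h.periodic h.hasDerivAt
    (continuous_const.mul h.continuous_rhs) p q
  simp_rw [mul_left_comm _ c, intervalIntegral.integral_const_mul] at hibp
  have hp : (1 : ℝ) ≤ p + 1 := by simp
  calc |moment r p (q + 1)| ≤ |(p + 1) * moment r p (q + 1)| := by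
        rw [abs_mul, abs_of_pos (by positivity : (0 : ℝ) < p + 1)]
        exact le_mul_of_one_le_left (abs_nonneg _) hp
    _ = (q + 1) * |c| * |∫ θ in (0)..(2 * π), cos θ ^ (p + 1) * r θ ^ q * f θ| := by
        rw [hibp, abs_mul, abs_mul, abs_of_pos (by positivity : (0 : ℝ) < q + 1), mul_assoc]
    _ ≤ _ := by gcongr; exact h.abs_coeff_le

theorem integral_eq (h : IsNearPolySolution k B H ε c r f) (p q : ℕ) :
    ∫ θ in (0)..(2 * π), cos θ ^ p * r θ ^ q * f θ
      = ∑ i ∈ Finset.range k, ε ^ i * moment r (p + i) (q + i + 2)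
        + ∫ θ in (0)..(2 * π), cos θ ^ p * r θ ^ q * (f θ - cosSinPoly k ε θ (r θ)) := by
  have hr := h.continuous
  have hf := h.continuous_rhs
  have hpoly : Continuous fun θ => cosSinPoly k ε θ (r θ) := by unfold cosSinPoly; fun_prop
  rw [← integral_cos_pow_mul_pow_mul_cosSinPoly hr, ← intervalIntegral.integral_add
    (by apply Continuous.intervalIntegrable; fun_prop)
    (by apply Continuous.intervalIntegrable; fun_prop)]
  congr 1 with θ
  ring

theorem abs_integral_sub_cosSinPoly_le (h : IsNearPolySolution k B H ε c r f) (p q : ℕ) :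
    |∫ θ in (0)..(2 * π), cos θ ^ p * r θ ^ q * (f θ - cosSinPoly k ε θ (r θ))|
      ≤ B ^ q * H * ε ^ (k - 1) * (2 * π) := by
  have := intervalIntegral.norm_integral_le_of_norm_le_const (a := 0) (b := 2 * π)
    (f := fun θ => cos θ ^ p * r θ ^ q * (f θ - cosSinPoly k ε θ (r θ)))
    (C := B ^ q * (H * ε ^ (k - 1))) fun θ _ => by
      rw [Real.norm_eq_abs, abs_mul, abs_mul, abs_pow]
      have hcos := pow_le_one₀ (n := p) (abs_nonneg _) (abs_cos_le_one θ)
      have hr := h.abs_pow_le q θ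
      have hrem := h.abs_sub_cosSinPoly_le θ
      have := h.remainder_nonneg
      have := h.bound_nonneg
      calc |cos θ| ^ p * |r θ ^ q| * |f θ - cosSinPoly k ε θ (r θ)|
          ≤ 1 * B ^ q * (H * ε ^ (k - 1)) := by gcongr
        _ = B ^ q * (H * ε ^ (k - 1)) := by ring
  simpa [abs_of_pos two_pi_pos, mul_assoc] using this

theorem integral_rhs_eq_zero (h : IsNearPolySolution k B H ε c r f) (hc : c ≠ 0) :
    ∫ θ in (0)..(2 * π), f θ = 0 := by
  have := h.periodic.integral_deriv_eq_zero h.hasDerivAt (continuous_const.mul h.continuous_rhs)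
  rw [intervalIntegral.integral_const_mul] at this
  exact (mul_eq_zero.1 this).resolve_left hc

theorem abs_sub_le (h : IsNearPolySolution k B H ε c r f) (x y : ℝ) :
    |r x - r y| ≤ ε * (∑ i ∈ Finset.range k, B ^ (i + 2) + H) * (2 * π) := by
  refine h.periodic.abs_sub_le two_pi_pos h.hasDerivAt (fun θ => ?_) x y
  have hpoly : |cosSinPoly k ε θ (r θ)| ≤ ∑ i ∈ Finset.range k, B ^ (i + 2) := by
    refine (Finset.abs_sum_le_sum_abs _ _).trans (Finset.sum_le_sum fun i _ => ?_)
    rw [abs_mul, abs_mul, abs_mul, abs_pow, abs_pow, abs_of_pos h.pos]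
    have hε := pow_le_one₀ (n := i) h.pos.le h.le_one
    have hcos := pow_le_one₀ (n := i) (abs_nonneg _) (abs_cos_le_one θ)
    have hsin := abs_sin_le_one θ
    have hr := h.abs_pow_le (i + 2) θ
    calc ε ^ i * (|cos θ| ^ i * |sin θ| * |r θ ^ (i + 2)|) ≤ 1 * (1 * 1 * B ^ (i + 2)) := by
          gcongr
      _ = B ^ (i + 2) := by ring
  have hrem : |f θ - cosSinPoly k ε θ (r θ)| ≤ H :=
    (h.abs_sub_cosSinPoly_le θ).trans
      (mul_le_of_le_one_right h.remainder_nonneg (pow_le_one₀ h.pos.le h.le_one))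
  have hf : |f θ| ≤ ∑ i ∈ Finset.range k, B ^ (i + 2) + H :=
    calc |f θ| ≤ |cosSinPoly k ε θ (r θ)| + |f θ - cosSinPoly k ε θ (r θ)| := by
          simpa using abs_add_le (cosSinPoly k ε θ (r θ)) (f θ - cosSinPoly k ε θ (r θ))
      _ ≤ _ := add_le_add hpoly hrem
  rw [abs_mul]
  exact mul_le_mul h.abs_coeff_le hf (abs_nonneg _) h.pos.le

end IsNearPolySolution

theorem exists_forall_abs_moment_le (k : ℕ) (B H : ℝ) {d : ℕ} (hd : d ≤ k) (p q : ℕ) :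
    ∃ C, ∀ ε c r f, IsNearPolySolution k B H ε c r f → |moment r p q| ≤ C * ε ^ d := by
  induction d generalizing p q with
  | zero => exact ⟨B ^ q * (2 * π), fun ε c r f h => by simpa using h.abs_moment_le p q⟩
  | succ d ih =>
    choose C hC using ih (by omega)
    cases q with
    | zero => exact ⟨0, fun ε c r f _ => by simp [moment_zero_right]⟩
    | succ q =>
      refine ⟨(q + 1) * (∑ i ∈ Finset.range k, C (p + 1 + i) (q + i + 2) + B ^ q * H * (2 * π)),
        fun ε c r f h => ?_⟩
      have hεd : ε ^ (k - 1) ≤ ε ^ d := pow_le_pow_of_le_one h.pos.le h.le_one (by omega)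
      have hsum : |∑ i ∈ Finset.range k, ε ^ i * moment r (p + 1 + i) (q + i + 2)|
          ≤ (∑ i ∈ Finset.range k, C (p + 1 + i) (q + i + 2)) * ε ^ d := by
        rw [Finset.sum_mul]
        refine (Finset.abs_sum_le_sum_abs _ _).trans (Finset.sum_le_sum fun i _ => ?_)
        rw [abs_mul, abs_of_nonneg (pow_nonneg h.pos.le i)]
        exact mul_le_of_le_one_left (abs_nonneg _) (pow_le_one₀ h.pos.le h.le_one)
          |>.trans (hC _ _ ε c r f h)
      have hrem : |∫ θ in (0)..(2 * π),
          cos θ ^ (p + 1) * r θ ^ q * (f θ - cosSinPoly k ε θ (r θ))|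
          ≤ B ^ q * H * ε ^ d * (2 * π) := by
        have := h.bound_nonneg
        have := h.remainder_nonneg
        calc _ ≤ B ^ q * H * ε ^ (k - 1) * (2 * π) := h.abs_integral_sub_cosSinPoly_le (p + 1) q
          _ ≤ _ := by gcongr
      calc |moment r p (q + 1)|
          ≤ (q + 1) * ε * |∫ θ in (0)..(2 * π), cos θ ^ (p + 1) * r θ ^ q * f θ| :=
            h.abs_moment_succ_le p q
        _ ≤ (q + 1) * ε * ((∑ i ∈ Finset.range k, C (p + 1 + i) (q + i + 2)) * ε ^ d
            + B ^ q * H * ε ^ d * (2 * π)) := by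
            have := h.pos
            rw [h.integral_eq]
            gcongr
            exact (abs_add_le _ _).trans (add_le_add hsum hrem)
        _ = _ := by ring

theorem exists_forall_abs_integral_sub_cosSinPoly_le (k : ℕ) (B H : ℝ) :
    ∃ C, ∀ ε c r f, IsNearPolySolution k B H ε c r f → c ≠ 0 →
      |∫ θ in (0)..(2 * π), (f θ - cosSinPoly k ε θ (r θ))| ≤ C * ε ^ k := by
  choose C hC using fun i => exists_forall_abs_moment_le k B H (Nat.sub_le k i) i (i + 2)
  refine ⟨∑ i ∈ Finset.range k, C i, fun ε c r f h hc => ?_⟩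
  have hr := h.continuous
  have hpoly := integral_cos_pow_mul_pow_mul_cosSinPoly hr k 0 0 ε
  simp only [pow_zero, one_mul, zero_add] at hpoly
  rw [intervalIntegral.integral_sub (h.continuous_rhs.intervalIntegrable _ _)
    (by apply Continuous.intervalIntegrable; unfold cosSinPoly; fun_prop),
    h.integral_rhs_eq_zero hc, hpoly, zero_sub, abs_neg, Finset.sum_mul]
  refine (Finset.abs_sum_le_sum_abs _ _).trans (Finset.sum_le_sum fun i hi => ?_)
  rw [abs_mul, abs_of_nonneg (pow_nonneg h.pos.le i)]
  calc ε ^ i * |moment r i (i + 2)| ≤ ε ^ i * (C i * ε ^ (k - i)) := by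
        have := h.pos
        gcongr
        exact hC i ε c r f h
    _ = C i * ε ^ k := by
        rw [mul_left_comm, ← pow_add, Nat.add_sub_cancel' (Finset.mem_range.1 hi).le]

namespace Odd

variable {n : ℕ} {g : ℝ → ℝ}

theorem root_le_root_iff (hn : Odd n) (hg : ∀ u, g u ^ n = u) {u v : ℝ} :
    g u ≤ g v ↔ u ≤ v := by
  rw [← hn.strictMono_pow.le_iff_le, hg, hg]

theorem root_pos_iff (hn : Odd n) (hg : ∀ u, g u ^ n = u) {u : ℝ} : 0 < g u ↔ 0 < u := by
  rw [← hn.pow_pos_iff, hg]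

theorem root_neg (hn : Odd n) (hg : ∀ u, g u ^ n = u) (u : ℝ) : g (-u) = -g u :=
  hn.strictMono_pow.injective (by simp only [hg, hn.neg_pow])

theorem continuous_root (hn : Odd n) (hg : ∀ u, g u ^ n = u) : Continuous g :=
  Monotone.continuous_of_surjective (fun _ _ => (hn.root_le_root_iff hg).2)
    fun u => ⟨u ^ n, hn.strictMono_pow.injective (hg _)⟩

theorem abs_root_le (hn : Odd n) (hg : ∀ u, g u ^ n = u) {u b : ℝ} (hb : 0 ≤ b)
    (hu : |u| ≤ b ^ n) : |g u| ≤ b := by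
  rwa [← pow_le_pow_iff_left₀ (abs_nonneg _) hb hn.pos.ne', ← abs_pow, hg]

end Odd

theorem exists_abs_le_of_continuousOn_of_periodic {R : ℝ → ℝ → ℝ → ℝ} {K L : Set ℝ}
    (hK : IsCompact K) (hL : IsCompact L) {T : ℝ} (hT : 0 < T)
    (hR : ContinuousOn (fun p : ℝ × ℝ × ℝ => R p.1 p.2.1 p.2.2) (Set.univ ×ˢ K ×ˢ L))
    (hper : ∀ θ x e, R (θ + T) x e = R θ x e) :
    ∃ M, ∀ θ, ∀ x ∈ K, ∀ e ∈ L, |R θ x e| ≤ M := by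
  obtain ⟨M, hM⟩ := ((isCompact_Icc (a := 0) (b := T)).prod (hK.prod hL))
    |>.exists_bound_of_continuousOn (hR.mono fun p hp => ⟨trivial, hp.2⟩)
  refine ⟨M, fun θ x hx e he => ?_⟩
  have hperθ : Function.Periodic (R · x e) T := fun t => hper t x e
  obtain ⟨y, hy, hθy⟩ := hperθ.exists_mem_Ico₀ hT θ
  rw [hθy, ← Real.norm_eq_abs]
  exact hM (y, x, e) ⟨Set.Ico_subset_Icc_self hy, hx, he⟩

theorem sum_Icc_add_eq_cosSinPoly {k : ℕ} (hk : 1 ≤ k) (ε θ x y : ℝ) :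
    (∑ i ∈ Finset.Icc 1 (k - 1), ε ^ (i - 1) * x ^ (i + 1) * cos θ ^ (i - 1) * sin θ)
        + ε ^ (k - 1) * (x * ((x ^ k * cos θ ^ (k - 1) + y * sin θ) * sin θ))
      = cosSinPoly k ε θ x + ε ^ (k - 1) * (x * y * sin θ ^ 2) := by
  obtain ⟨m, rfl⟩ : ∃ m, k = m + 1 := ⟨k - 1, by omega⟩
  rw [cosSinPoly, Finset.sum_range_succ, ← Finset.Ico_add_one_right_eq_Icc,
    Finset.sum_Ico_eq_sum_range]
  simp only [Nat.add_sub_cancel]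
  rw [add_assoc]
  congr 1
  · refine Finset.sum_congr rfl fun i _ => ?_
    rw [add_comm 1 i, Nat.add_sub_cancel]
    ring
  · ring

theorem exists_mem_Ioc_forall_of_eventually {P : ℝ → Prop} {ε₀ : ℝ} (hε₀ : 0 < ε₀)
    (h : ∀ᶠ ε in 𝓝[>] 0, P ε) : ∃ ε₁ ∈ Set.Ioc 0 ε₀, ∀ ε ∈ Set.Ioc 0 ε₁, P ε := by
  obtain ⟨u, hu, hP⟩ := (nhdsGT_basis_Ioc (0 : ℝ)).eventually_iff.1 h
  exact ⟨min u ε₀, ⟨lt_min hu hε₀, min_le_right _ _⟩,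
    fun ε hε => hP ⟨hε.1, hε.2.trans (min_le_left _ _)⟩⟩

theorem mul_pi_le_integral_mul_sin_sq {g : ℝ → ℝ} (hg : Continuous g) {δ : ℝ}
    (h : ∀ θ, δ ≤ g θ) : δ * π ≤ ∫ θ in (0)..(2 * π), g θ * sin θ ^ 2 := by
  have hδ : ∫ θ in (0)..(2 * π), δ * sin θ ^ 2 = δ * π := by
    rw [intervalIntegral.integral_const_mul, integral_sin_sq]
    simp
  rw [← hδ]
  exact intervalIntegral.integral_mono_on two_pi_pos.le
    (by apply Continuous.intervalIntegrable; fun_prop)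
    (by apply Continuous.intervalIntegrable; fun_prop)
    fun θ _ => mul_le_mul_of_nonneg_right (h θ) (sq_nonneg _)

section Oscillator

variable {k : ℕ} {α ε₀ MR : ℝ} {cbrt : ℝ → ℝ} {R F : ℝ → ℝ → ℝ → ℝ}

theorem abs_F_sub_cosSinPoly_le (hα1 : α < 1) (hcbrt : ∀ u, cbrt u ^ 3 = u)
    (hR : ∀ θ, ∀ x ∈ Set.Icc (1 - α) (1 + α), ∀ e ∈ Set.Icc 0 ε₀, |R θ x e| ≤ MR)
    (hF : ∀ θ x e, F θ x e
      = cosSinPoly k e θ x + e ^ (k - 1) * (x * cbrt (x ^ 2 - 1) * sin θ ^ 2 + e * R θ x e))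
    {θ x e : ℝ} (hx : x ∈ Set.Icc (1 - α) (1 + α)) (he : e ∈ Set.Icc 0 ε₀) (he1 : e ≤ 1) :
    |F θ x e - cosSinPoly k e θ x| ≤ (4 + MR) * e ^ (k - 1) := by
  have hx2 : |x| ≤ 2 := abs_le.2 ⟨by linarith [hx.1], by linarith [hx.2]⟩
  have hcbrt2 : |cbrt (x ^ 2 - 1)| ≤ 2 :=
    (by decide : Odd 3).abs_root_le hcbrt zero_le_two
      (abs_le.2 ⟨by nlinarith [sq_nonneg x], by nlinarith [abs_le.1 hx2]⟩)
  have hsin : |sin θ ^ 2| ≤ 1 := by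
    rw [abs_pow]; exact pow_le_one₀ (abs_nonneg _) (abs_sin_le_one θ)
  have heR : |e * R θ x e| ≤ MR := by
    rw [abs_mul, abs_of_nonneg he.1]
    exact (mul_le_of_le_one_left (abs_nonneg _) he1).trans (hR θ x hx e he)
  rw [hF, add_sub_cancel_left, abs_mul, abs_of_nonneg (pow_nonneg he.1 _), mul_comm]
  refine mul_le_mul_of_nonneg_right ?_ (pow_nonneg he.1 _)
  calc |x * cbrt (x ^ 2 - 1) * sin θ ^ 2 + e * R θ x e|
      ≤ |x| * |cbrt (x ^ 2 - 1)| * |sin θ ^ 2| + |e * R θ x e| := by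
        rw [← abs_mul, ← abs_mul]; exact abs_add_le _ _
    _ ≤ 2 * 2 * 1 + MR := by gcongr
    _ = 4 + MR := by ring

theorem isNearPolySolution_of_hasDerivAt (hα1 : α < 1) (hcbrt : ∀ u, cbrt u ^ 3 = u)
    (hRcont : ContinuousOn (fun p : ℝ × ℝ × ℝ => R p.1 p.2.1 p.2.2)
      (Set.univ ×ˢ Set.univ ×ˢ Set.Icc 0 ε₀))
    (hR : ∀ θ, ∀ x ∈ Set.Icc (1 - α) (1 + α), ∀ e ∈ Set.Icc 0 ε₀, |R θ x e| ≤ MR)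
    (hF : ∀ θ x e, F θ x e
      = cosSinPoly k e θ x + e ^ (k - 1) * (x * cbrt (x ^ 2 - 1) * sin θ ^ 2 + e * R θ x e))
    {ε l : ℝ} (hε : ε ∈ Set.Ioc 0 ε₀) (hε1 : ε ≤ 1) (hl : |l| ≤ 1) {r : ℝ → ℝ}
    (hper : Function.Periodic r (2 * π)) (hr : ∀ θ, HasDerivAt r (ε * l * F θ (r θ) ε) θ)
    (hrα : ∀ θ, r θ ∈ Set.Icc (1 - α) (1 + α)) :
    IsNearPolySolution k 2 (4 + MR) ε (ε * l) r (fun θ => F θ (r θ) ε) where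
  periodic := hper
  hasDerivAt := hr
  continuous_rhs := by
    have hrc : Continuous r := continuous_iff_continuousAt.2 fun θ => (hr θ).continuousAt
    have hRc : Continuous fun θ => R θ (r θ) ε :=
      hRcont.comp_continuous (f := fun θ => (θ, r θ, ε)) (by fun_prop)
        fun _ => ⟨trivial, trivial, hε.1.le, hε.2⟩
    have hcbrtc := (by decide : Odd 3).continuous_root hcbrt
    have hpoly : Continuous fun θ => cosSinPoly k ε θ (r θ) := by unfold cosSinPoly; fun_prop
    have hsig : Continuous fun θ => r θ * cbrt (r θ ^ 2 - 1) * sin θ ^ 2 := by fun_prop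
    simp_rw [hF]
    exact hpoly.add (continuous_const.mul (hsig.add (continuous_const.mul hRc)))
  abs_le θ := abs_le.2 ⟨by linarith [(hrα θ).1], by linarith [(hrα θ).2]⟩
  pos := hε.1
  le_one := hε1
  abs_coeff_le := by
    rw [abs_mul, abs_of_pos hε.1]; exact mul_le_of_le_one_right hε.1.le hl
  abs_sub_cosSinPoly_le θ :=
    abs_F_sub_cosSinPoly_le hα1 hcbrt hR hF (hrα θ) ⟨hε.1.le, hε.2⟩ hε1

theorem exists_abs_integral_signal_le (hk : 1 ≤ k) (hα1 : α < 1) (hcbrt : ∀ u, cbrt u ^ 3 = u)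
    (hRcont : ContinuousOn (fun p : ℝ × ℝ × ℝ => R p.1 p.2.1 p.2.2)
      (Set.univ ×ˢ Set.univ ×ˢ Set.Icc 0 ε₀))
    (hR : ∀ θ, ∀ x ∈ Set.Icc (1 - α) (1 + α), ∀ e ∈ Set.Icc 0 ε₀, |R θ x e| ≤ MR)
    (hF : ∀ θ x e, F θ x e
      = cosSinPoly k e θ x + e ^ (k - 1) * (x * cbrt (x ^ 2 - 1) * sin θ ^ 2 + e * R θ x e)) :
    ∃ C, ∀ ε ∈ Set.Ioc 0 ε₀, ε ≤ 1 → ∀ l, l ≠ 0 → |l| ≤ 1 → ∀ r : ℝ → ℝ,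
      Function.Periodic r (2 * π) → (∀ θ, HasDerivAt r (ε * l * F θ (r θ) ε) θ) →
      (∀ θ, r θ ∈ Set.Icc (1 - α) (1 + α)) →
      |∫ θ in (0)..(2 * π), r θ * cbrt (r θ ^ 2 - 1) * sin θ ^ 2| ≤ C * ε := by
  obtain ⟨C, hC⟩ := exists_forall_abs_integral_sub_cosSinPoly_le k 2 (4 + MR)
  refine ⟨C + MR * (2 * π), fun ε hε hε1 l hl0 hl1 r hper hr hrα => ?_⟩
  have h := isNearPolySolution_of_hasDerivAt hα1 hcbrt hRcont hR hF hε hε1 hl1 hper hr hrα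
  have hrc := h.continuous
  have hRc : Continuous fun θ => R θ (r θ) ε :=
    hRcont.comp_continuous (f := fun θ => (θ, r θ, ε)) (by fun_prop)
      fun _ => ⟨trivial, trivial, hε.1.le, hε.2⟩
  have hcbrtc := (by decide : Odd 3).continuous_root hcbrt
  set S := ∫ θ in (0)..(2 * π), r θ * cbrt (r θ ^ 2 - 1) * sin θ ^ 2
  set I := ∫ θ in (0)..(2 * π), R θ (r θ) ε
  have hsplit : ∫ θ in (0)..(2 * π), (F θ (r θ) ε - cosSinPoly k ε θ (r θ))
      = ε ^ (k - 1) * (S + ε * I) := by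
    simp_rw [hF, add_sub_cancel_left]
    have hsig : Continuous fun θ => r θ * cbrt (r θ ^ 2 - 1) * sin θ ^ 2 := by fun_prop
    have hεR : Continuous fun θ => ε * R θ (r θ) ε := continuous_const.mul hRc
    rw [intervalIntegral.integral_const_mul, intervalIntegral.integral_add
      (hsig.intervalIntegrable _ _) (hεR.intervalIntegrable _ _),
      intervalIntegral.integral_const_mul]
  have hI : |I| ≤ MR * (2 * π) := by
    simpa [abs_of_pos two_pi_pos] using intervalIntegral.norm_integral_le_of_norm_le_const
      (a := 0) (b := 2 * π) (f := fun θ => R θ (r θ) ε)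
      fun θ _ => (Real.norm_eq_abs _).trans_le (hR θ (r θ) (hrα θ) ε ⟨hε.1.le, hε.2⟩)
  have hSI : |S + ε * I| ≤ C * ε := by
    have hpow : ε ^ k = ε ^ (k - 1) * ε := by rw [← pow_succ, Nat.sub_add_cancel hk]
    have := hC ε (ε * l) r _ h (mul_ne_zero hε.1.ne' hl0)
    rw [hsplit, abs_mul, abs_of_pos (pow_pos hε.1 _), hpow, mul_left_comm] at this
    exact le_of_mul_le_mul_left this (pow_pos hε.1 _)
  calc |S| = |(S + ε * I) - ε * I| := by rw [add_sub_cancel_right]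
    _ ≤ |S + ε * I| + ε * |I| :=
        (abs_sub _ _).trans_eq (by rw [abs_mul, abs_of_pos hε.1])
    _ ≤ C * ε + ε * (MR * (2 * π)) := by gcongr; exact hε.1.le
    _ = (C + MR * (2 * π)) * ε := by ring

theorem mem_Ioo_of_abs_integral_signal_lt (hα0 : 0 < α) (hα1 : α < 1)
    (hcbrt : ∀ u, cbrt u ^ 3 = u) {r : ℝ → ℝ} (hrc : Continuous r)
    (hrα : ∀ θ, r θ ∈ Set.Icc (1 - α) (1 + α)) (hosc : ∀ x y, |r x - r y| ≤ α / 2)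
    (hS : |∫ θ in (0)..(2 * π), r θ * cbrt (r θ ^ 2 - 1) * sin θ ^ 2|
      < (1 - α) * cbrt (α / 2) * π) (θ : ℝ) :
    r θ ∈ Set.Ioo (1 - α) (1 + α) := by
  have hodd : Odd 3 := by decide
  have hδ : 0 < cbrt (α / 2) := (hodd.root_pos_iff hcbrt).2 (by positivity)
  have hg : Continuous fun θ => r θ * cbrt (r θ ^ 2 - 1) :=
    hrc.mul ((hodd.continuous_root hcbrt).comp (by fun_prop))
  obtain ⟨hlow, hup⟩ := hrα θ
  refine ⟨lt_of_le_of_ne hlow fun hθ => ?_, lt_of_le_of_ne hup fun hθ => ?_⟩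
  · -- `r` stays below `1 - α / 2`, where `r ^ 2 - 1 ≤ -α / 2`
    have hneg : ∀ y, (1 - α) * cbrt (α / 2) ≤ -(r y * cbrt (r y ^ 2 - 1)) := by
      intro y
      have hy := hrα y
      have hry := (abs_le.1 (hosc y θ)).2
      have hc : cbrt (r y ^ 2 - 1) ≤ -cbrt (α / 2) := by
        rw [← hodd.root_neg hcbrt, hodd.root_le_root_iff hcbrt]
        nlinarith [hy.1]
      nlinarith [hy.1]
    have := mul_pi_le_integral_mul_sin_sq hg.neg hneg
    simp only [Pi.neg_apply, neg_mul, intervalIntegral.integral_neg] at this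
    linarith [neg_le_abs (∫ θ in (0)..(2 * π), r θ * cbrt (r θ ^ 2 - 1) * sin θ ^ 2)]
  · -- `r` stays above `1 + α / 2`, where `r ^ 2 - 1 ≥ α / 2`
    have hpos : ∀ y, (1 - α) * cbrt (α / 2) ≤ r y * cbrt (r y ^ 2 - 1) := by
      intro y
      have hy := hrα y
      have hry := (abs_le.1 (hosc y θ)).1
      have hc : cbrt (α / 2) ≤ cbrt (r y ^ 2 - 1) := by
        rw [hodd.root_le_root_iff hcbrt]
        nlinarith
      exact mul_le_mul hy.1 hc hδ.le (by linarith [hy.1])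
    have := mul_pi_le_integral_mul_sin_sq hg hpos
    linarith [le_abs_self (∫ θ in (0)..(2 * π), r θ * cbrt (r θ ^ 2 - 1) * sin θ ^ 2)]

end Oscillator

/-- Verification of hypothesis (H) for the polar-coordinates equation of the perturbed
harmonic oscillator: there is `ε₁ ∈ (0, ε₀]` such that for every `λ ∈ (0,1]` and
`ε ∈ (0, ε₁]`, every `2π`-periodic `C¹` solution of `r' = ελ F(θ, r, ε)` with values in
`[1 − α, 1 + α]` in fact takes values in `(1 − α, 1 + α)`. Here `cbrt` is the real cube
root. -/
theorem stmt_12 (k : ℕ) (hk : 1 ≤ k) (α : ℝ) (hα0 : 0 < α) (hα1 : α < 1)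
    (ε₀ : ℝ) (hε₀ : 0 < ε₀)
    (R : ℝ → ℝ → ℝ → ℝ)
    (hRcont : ContinuousOn (fun p : ℝ × ℝ × ℝ => R p.1 p.2.1 p.2.2)
      (Set.univ ×ˢ Set.univ ×ˢ Set.Icc 0 ε₀))
    (hRper : ∀ θ r ε, R (θ + 2 * Real.pi) r ε = R θ r ε)
    (cbrt : ℝ → ℝ) (hcbrt : ∀ u, (cbrt u) ^ 3 = u)
    (F : ℝ → ℝ → ℝ → ℝ)
    (hF : ∀ θ r ε, F θ r ε =
      (∑ i ∈ Finset.Icc 1 (k - 1),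
        ε ^ (i - 1) * r ^ (i + 1) * Real.cos θ ^ (i - 1) * Real.sin θ)
      + ε ^ (k - 1) * (r * ((r ^ k * Real.cos θ ^ (k - 1)
          + cbrt (r ^ 2 - 1) * Real.sin θ) * Real.sin θ))
      + ε ^ k * R θ r ε) :
    ∃ ε₁ ∈ Set.Ioc 0 ε₀, ∀ l ∈ Set.Ioc (0:ℝ) 1, ∀ ε ∈ Set.Ioc (0:ℝ) ε₁,
      ∀ r : ℝ → ℝ, Function.Periodic r (2 * Real.pi) → ContDiff ℝ 1 r →
        (∀ θ, HasDerivAt r (ε * l * F θ (r θ) ε) θ) →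
        (∀ θ, r θ ∈ Set.Icc (1 - α) (1 + α)) →
        ∀ θ, r θ ∈ Set.Ioo (1 - α) (1 + α) := by
  obtain ⟨MR, hMR⟩ := exists_abs_le_of_continuousOn_of_periodic
    (isCompact_Icc (a := 1 - α) (b := 1 + α)) isCompact_Icc two_pi_pos
    (hRcont.mono fun _ hp => ⟨trivial, trivial, hp.2.2⟩) hRper
  have hF' : ∀ θ x e, F θ x e = cosSinPoly k e θ x
      + e ^ (k - 1) * (x * cbrt (x ^ 2 - 1) * sin θ ^ 2 + e * R θ x e) := fun θ x e => by
    rw [hF, sum_Icc_add_eq_cosSinPoly hk, ← Nat.sub_add_cancel hk, pow_succ, Nat.add_sub_cancel]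
    ring
  obtain ⟨C, hC⟩ := exists_abs_integral_signal_le hk hα1 hcbrt hRcont hMR hF'
  have hδ : 0 < (1 - α) * cbrt (α / 2) * π := by
    have := ((by decide : Odd 3).root_pos_iff hcbrt).2 (half_pos hα0)
    have := sub_pos.2 hα1
    positivity
  have hsmall : ∀ᶠ ε in 𝓝 (0 : ℝ), ε < 1
      ∧ ε * (∑ i ∈ Finset.range k, (2 : ℝ) ^ (i + 2) + (4 + MR)) * (2 * π) < α / 2
      ∧ C * ε < (1 - α) * cbrt (α / 2) * π :=
    (eventually_lt_nhds one_pos).and ((Tendsto.eventually_lt_const (half_pos hα0)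
      (Continuous.tendsto' (by fun_prop) 0 0 (by simp))).and
      (Tendsto.eventually_lt_const hδ (Continuous.tendsto' (by fun_prop) 0 0 (by simp))))
  obtain ⟨ε₁, hε₁, hsmall⟩ :=
    exists_mem_Ioc_forall_of_eventually hε₀ (hsmall.filter_mono nhdsWithin_le_nhds)
  refine ⟨ε₁, hε₁, fun l hl ε hε r hper _ hr hrα => ?_⟩
  obtain ⟨hε1, hosc, hsig⟩ := hsmall ε hε
  have hεε₀ : ε ∈ Set.Ioc 0 ε₀ := ⟨hε.1, hε.2.trans hε₁.2⟩
  have hl1 : |l| ≤ 1 := by rw [abs_of_pos hl.1]; exact hl.2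
  have h := isNearPolySolution_of_hasDerivAt hα1 hcbrt hRcont hMR hF' hεε₀ hε1.le hl1 hper hr hrα
  exact mem_Ioo_of_abs_integral_signal_lt hα0 hα1 hcbrt h.continuous hrα
    (fun x y => (h.abs_sub_le x y).trans hosc.le)
    ((hC ε hεε₀ hε1.le l hl.1.ne' hl1 r hper hr hrα).trans_lt hsig)
end
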